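/- Let X be a nonempty compact metric space, μ a finite Borel measure on X with μ(X) > 0, and f, g : X → ℝ continuous. Then osc(f+g) = osc(f) + osc(g) if and only if both ∫_X normalize(f+g) dμ = ∫_X normalize(f) dμ + ∫_X normalize(g) dμ and ∫_X normalize(−(f+g)) dμ = ∫_X normalize(−f) dμ + ∫_X normalize(−g) dμ. -/

import Mathlib

open MeasureTheory Set

/-- The (attained) minimum of `f` on a nonempty compact space. -/
noncomputable def minF {X : Type*} (f : X → ℝ) : ℝ := sInf (Set.range f)

/-- The (attained) maximum of `f` on a nonempty compact space. -/
noncomputable def maxF {X : Type*} (f : X → ℝ) : ℝ := sSup (Set.range f)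

/-- The oscillation `max f - min f`. -/
noncomputable def oscF {X : Type*} (f : X → ℝ) : ℝ := maxF f - minF f

/-- `normalize f = f - min f`. -/
noncomputable def normF {X : Type*} (f : X → ℝ) : X → ℝ := fun x => f x - minF f

/-- The minimizer set of `f`. -/
def argminF {X : Type*} (f : X → ℝ) : Set X := {x | f x = minF f}

/-- The maximizer set of `f`. -/
def argmaxF {X : Type*} (f : X → ℝ) : Set X := {x | f x = maxF f}

/-!
Integrating `normalize f = f - min f` gives `∫ f - μ(X) · min f`, and `∫` is additive, so the
first integral identity says `min (f + g) = min f + min g`; since `min (-h) = -max h`, the second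
says `max (f + g) = max f + max g`. Finally `min (f + g) ≥ min f + min g` and
`max (f + g) ≤ max f + max g`, so `osc` is additive exactly when both of these are equalities.
-/

section Extrema

variable {X : Type*} [TopologicalSpace X] [CompactSpace X] {f g : X → ℝ}

lemma minF_le (hf : Continuous f) (x : X) : minF f ≤ f x :=
  csInf_le (isCompact_range hf).bddBelow (mem_range_self x)

lemma le_maxF (hf : Continuous f) (x : X) : f x ≤ maxF f :=
  le_csSup (isCompact_range hf).bddAbove (mem_range_self x)

variable [Nonempty X]

lemma exists_eq_minF (hf : Continuous f) : ∃ x, f x = minF f :=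
  (isCompact_range hf).sInf_mem (range_nonempty f)

lemma exists_eq_maxF (hf : Continuous f) : ∃ x, f x = maxF f :=
  (isCompact_range hf).sSup_mem (range_nonempty f)

lemma minF_add_minF_le (hf : Continuous f) (hg : Continuous g) :
    minF f + minF g ≤ minF (fun x => f x + g x) := by
  obtain ⟨x, hx⟩ := exists_eq_minF (hf.add hg)
  exact hx ▸ add_le_add (minF_le hf x) (minF_le hg x)

lemma maxF_add_le (hf : Continuous f) (hg : Continuous g) :
    maxF (fun x => f x + g x) ≤ maxF f + maxF g := by
  obtain ⟨x, hx⟩ := exists_eq_maxF (hf.add hg)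
  exact hx ▸ add_le_add (le_maxF hf x) (le_maxF hg x)

lemma minF_neg (hf : Continuous f) : minF (fun x => -f x) = -maxF f := by
  obtain ⟨x, hx⟩ := exists_eq_maxF hf
  obtain ⟨y, hy⟩ := exists_eq_minF hf.neg
  apply le_antisymm
  · exact hx ▸ minF_le hf.neg x
  · exact hy ▸ neg_le_neg (le_maxF hf y)

lemma oscF_add_eq_iff (hf : Continuous f) (hg : Continuous g) :
    oscF (fun x => f x + g x) = oscF f + oscF g ↔
      minF (fun x => f x + g x) = minF f + minF g ∧
        maxF (fun x => f x + g x) = maxF f + maxF g := by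
  have hmin := minF_add_minF_le hf hg
  have hmax := maxF_add_le hf hg
  unfold oscF
  constructor
  · intro h
    constructor <;> linarith
  · rintro ⟨hmin_eq, hmax_eq⟩
    linarith

end Extrema

section Integrals

variable {X : Type*} [TopologicalSpace X] [CompactSpace X] [MeasurableSpace X]
  [OpensMeasurableSpace X] {μ : Measure X} [IsFiniteMeasure μ] {f g : X → ℝ}

lemma integral_normF (hf : Continuous f) :
    ∫ x, normF f x ∂μ = ∫ x, f x ∂μ - μ.real univ * minF f := by
  have hfi : Integrable f μ := hf.integrable_of_hasCompactSupport (.of_compactSpace f)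
  simp only [normF]
  rw [integral_sub hfi (integrable_const _), integral_const, smul_eq_mul]

lemma integral_normF_add_eq_iff (hμ : μ univ ≠ 0) (hf : Continuous f) (hg : Continuous g) :
    ∫ x, normF (fun x => f x + g x) x ∂μ = ∫ x, normF f x ∂μ + ∫ x, normF g x ∂μ ↔
      minF (fun x => f x + g x) = minF f + minF g := by
  have hμ' : μ.real univ ≠ 0 := (measureReal_ne_zero_iff (measure_ne_top μ _)).mpr hμ
  have hfi : Integrable f μ := hf.integrable_of_hasCompactSupport (.of_compactSpace f)
  have hgi : Integrable g μ := hg.integrable_of_hasCompactSupport (.of_compactSpace g)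
  rw [integral_normF (f := fun x => f x + g x) (hf.add hg), integral_normF hf, integral_normF hg, integral_add hfi hgi]
  constructor
  · intro h
    apply mul_left_cancel₀ hμ'
    linarith
  · intro h
    rw [h]
    ring

lemma integral_normF_neg_add_eq_iff [Nonempty X] (hμ : μ univ ≠ 0) (hf : Continuous f)
    (hg : Continuous g) :
    ∫ x, normF (fun x => -(f x + g x)) x ∂μ =
        ∫ x, normF (fun x => -f x) x ∂μ + ∫ x, normF (fun x => -g x) x ∂μ ↔
      maxF (fun x => f x + g x) = maxF f + maxF g := by
  have hneg : (fun x => -(f x + g x)) = fun x => -f x + -g x := by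
    funext x
    ring
  rw [hneg, integral_normF_add_eq_iff (f := fun x => -f x) (g := fun x => -g x) hμ hf.neg hg.neg,
    ← hneg, minF_neg (f := fun x => f x + g x) (hf.add hg), minF_neg hf, minF_neg hg, ← neg_add,
    neg_inj]

end Integrals

theorem stmt_3 {X : Type*} [MetricSpace X] [CompactSpace X] [Nonempty X]
    [MeasurableSpace X] [BorelSpace X]
    (μ : Measure X) [IsFiniteMeasure μ] (hμ : 0 < μ Set.univ)
    (f g : X → ℝ) (hf : Continuous f) (hg : Continuous g) :
    oscF (fun x => f x + g x) = oscF f + oscF g ↔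
      ((∫ x, normF (fun x => f x + g x) x ∂μ) =
          (∫ x, normF f x ∂μ) + ∫ x, normF g x ∂μ ∧
       (∫ x, normF (fun x => -(f x + g x)) x ∂μ) =
          (∫ x, normF (fun x => -f x) x ∂μ) + ∫ x, normF (fun x => -g x) x ∂μ) := by
  rw [oscF_add_eq_iff hf hg, integral_normF_add_eq_iff hμ.ne' hf hg,
    integral_normF_neg_add_eq_iff hμ.ne' hf hg]
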